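/- arXiv:0907.3990 — 4 statements merged into one kernel-verified Lean document; each statement's English description precedes it below -/
import Mathlib

section
/- For any t ∈ ℂ, λ(ξ) ∈ ℂ[ξ] and p(z) ∈ ℂ[z]: Φ_t fixes λ(ξ) and p(z), and Φ_t(λ(ξ)·p(z)) = λ(ξ) ∗_{-t} p(z). -/
/-! Λ kills every λ(ξ) and every p(z), since each of its terms δᵢ∂ᵢ does. On a product λ(ξ)p(z)
the ∂'s only see p and the δ's only see λ, and the δᵢ∂ᵢ pairwise commute, so the multinomial
theorem gives Λ^m(λp) = Σ_{|k|=m} (m!/k!) δ^kλ · ∂^kp. Hence Φ_t(λp) = Σ_k (t^{|k|}/k!) δ^kλ · ∂^kp,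
which is λ ∗_{-t} p because the terms of the star product with α ≠ 0 contain ∂^αλ = 0. All sums
are finite since δ^kλ = 0 as soon as |k| exceeds the total degree of λ. -/

open MvPolynomial

noncomputable section

/-- ℂ[ξ,z] in 2n variables: `Sum.inl i` is ξᵢ, `Sum.inr i` is zᵢ. -/
abbrev P (n : ℕ) := MvPolynomial (Fin n ⊕ Fin n) ℂ

variable {n : ℕ}

/-- ∂ᵢ = ∂/∂zᵢ -/
def dz (i : Fin n) : Module.End ℂ (P n) := (pderiv (Sum.inr i)).toLinearMap
/-- δᵢ = ∂/∂ξᵢ -/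
def dxi (i : Fin n) : Module.End ℂ (P n) := (pderiv (Sum.inl i)).toLinearMap
/-- ∂^α (the factors pairwise commute, so the ordered product is the mathematical one) -/
def Dz (α : Fin n → ℕ) : Module.End ℂ (P n) := (List.ofFn (fun i => dz i ^ α i)).prod
/-- δ^α -/
def Dxi (α : Fin n → ℕ) : Module.End ℂ (P n) := (List.ofFn (fun i => dxi i ^ α i)).prod
/-- |α| -/
def mdeg (α : Fin n → ℕ) : ℕ := ∑ i, α i
/-- α! -/
def mfact (α : Fin n → ℕ) : ℕ := ∏ i, (α i).factorial

/-- The deformed product `f ∗_t g = Σ_{α,β} ((-t)^{|α|+|β|}/(α!β!)) (δ^β ∂^α f)(∂^β δ^α g)`. -/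
def astar (t : ℂ) (f g : P n) : P n :=
  ∑ᶠ (α : Fin n → ℕ), ∑ᶠ (β : Fin n → ℕ),
    ((-t) ^ (mdeg α + mdeg β) / ((mfact α : ℂ) * (mfact β : ℂ))) •
      (Dxi β (Dz α f) * Dz β (Dxi α g))

/-- Λ = Σᵢ δᵢ∂ᵢ -/
def Lam : Module.End ℂ (P n) := ∑ i, dxi i * dz i
/-- Φ_t = e^{tΛ} -/
def Phi (t : ℂ) (f : P n) : P n := ∑ᶠ m : ℕ, (t ^ m / (m.factorial : ℂ)) • ((Lam ^ m) f)

def xiv (i : Fin n) : P n := X (Sum.inl i)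
def zv (i : Fin n) : P n := X (Sum.inr i)
def XiPow (α : Fin n → ℕ) : P n := ∏ i, xiv i ^ α i
def ZPowMon (α : Fin n → ℕ) : P n := ∏ i, zv i ^ α i
def mulXi (i : Fin n) : Module.End ℂ (P n) := LinearMap.mulLeft ℂ (xiv i)
def mulZ (i : Fin n) : Module.End ℂ (P n) := LinearMap.mulLeft ℂ (zv i)

/-- λ(ξ): the image of λ ∈ ℂ[ξ] in ℂ[ξ,z] -/
def ofXi (l : MvPolynomial (Fin n) ℂ) : P n := rename Sum.inl l
/-- p(z): the image of p ∈ ℂ[z] in ℂ[ξ,z] -/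
def ofZ (p : MvPolynomial (Fin n) ℂ) : P n := rename Sum.inr p

open Finset
open scoped Function

section PDeriv

variable {σ R : Type*} [CommSemiring R]

lemma pderiv_pderiv_comm (i j : σ) (f : MvPolynomial σ R) :
    pderiv i (pderiv j f) = pderiv j (pderiv i f) := by
  classical
  induction f using MvPolynomial.induction_on with
  | C a => simp
  | add p q hp hq => simp [hp, hq]
  | mul_X p k h =>
    simp only [pderiv_mul, map_add, h, pderiv_X, Pi.single_apply]
    split_ifs <;> simp_all [add_comm]

lemma commute_pderiv (i j : σ) :
    Commute ((pderiv i).toLinearMap : Module.End R (MvPolynomial σ R)) (pderiv j).toLinearMap :=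
  LinearMap.ext (pderiv_pderiv_comm i j)

lemma commute_pderiv_mulLeft {i : σ} {c : MvPolynomial σ R} (hc : pderiv i c = 0) :
    Commute (pderiv i).toLinearMap (LinearMap.mulLeft R c) :=
  LinearMap.ext fun x => by simp [hc]

lemma totalDegree_pderiv_add_one_le {i : σ} {f : MvPolynomial σ R} (h : pderiv i f ≠ 0) :
    (pderiv i f).totalDegree + 1 ≤ f.totalDegree := by
  obtain ⟨m, hm, hdeg⟩ := Finset.exists_mem_eq_sup _ (support_nonempty.2 h)
    (fun s : σ →₀ ℕ => s.sum fun _ e => e)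
  have hmi : m + Finsupp.single i 1 ∈ f.support := by
    rw [mem_support_iff, coeff_pderiv] at hm
    exact mem_support_iff.2 (left_ne_zero_of_mul hm)
  have := le_totalDegree hmi
  rw [Finsupp.sum_add_index' (fun _ => rfl) (fun _ _ _ => rfl),
    Finsupp.sum_single_index rfl] at this
  rw [totalDegree, hdeg]
  exact this

/-- The alternative `A f = 0` plays the role of the degree `-∞` of the zero polynomial. -/
def LowersTotalDegreeBy (A : Module.End R (MvPolynomial σ R)) (k : ℕ) : Prop :=
  ∀ f, A f = 0 ∨ (A f).totalDegree + k ≤ f.totalDegree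

namespace LowersTotalDegreeBy

lemma one : LowersTotalDegreeBy (1 : Module.End R (MvPolynomial σ R)) 0 :=
  fun _ => Or.inr le_rfl

lemma pderiv (i : σ) :
    LowersTotalDegreeBy ((pderiv i).toLinearMap : Module.End R (MvPolynomial σ R)) 1 :=
  fun _ => or_iff_not_imp_left.2 totalDegree_pderiv_add_one_le

lemma mul {A B : Module.End R (MvPolynomial σ R)} {k l : ℕ} (hA : LowersTotalDegreeBy A k)
    (hB : LowersTotalDegreeBy B l) : LowersTotalDegreeBy (A * B) (k + l) := by
  intro f
  rcases hB f with hBf | hBf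
  · simp [hBf]
  · rcases hA (B f) with hABf | hABf
    · exact Or.inl hABf
    · right
      simp only [Module.End.mul_apply]
      omega

lemma pow {A : Module.End R (MvPolynomial σ R)} {k : ℕ} (hA : LowersTotalDegreeBy A k) (m : ℕ) :
    LowersTotalDegreeBy (A ^ m) (m * k) := by
  induction m with
  | zero => simpa using one
  | succ m ih => simpa [pow_succ, add_mul] using ih.mul hA

lemma prod_ofFn {m : ℕ} {A : Fin m → Module.End R (MvPolynomial σ R)} {k : Fin m → ℕ}
    (hA : ∀ i, LowersTotalDegreeBy (A i) (k i)) :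
    LowersTotalDegreeBy (List.ofFn A).prod (∑ i, k i) := by
  induction m with
  | zero => simpa using one
  | succ m ih =>
    rw [List.ofFn_succ, List.prod_cons, Fin.sum_univ_succ]
    exact (hA 0).mul (ih fun i => hA i.succ)

lemma apply_eq_zero {A : Module.End R (MvPolynomial σ R)} {k : ℕ} (hA : LowersTotalDegreeBy A k)
    {f : MvPolynomial σ R} (hf : f.totalDegree < k) : A f = 0 :=
  (hA f).resolve_right (by omega)

end LowersTotalDegreeBy

end PDeriv

lemma List.prod_ofFn_eq_noncommProd {M : Type*} [Monoid M] {m : ℕ} (f : Fin m → M)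
    (hf : ((univ : Finset (Fin m)) : Set (Fin m)).Pairwise (Commute on f)) :
    (List.ofFn f).prod = univ.noncommProd f hf := by
  simp only [Finset.noncommProd, Fin.univ_val_map]
  exact (Multiset.noncommProd_coe _ _).symm

lemma commute_dxi_dxi (i j : Fin n) : Commute (dxi i) (dxi j) := commute_pderiv _ _

lemma commute_dz_dz (i j : Fin n) : Commute (dz i) (dz j) := commute_pderiv _ _

lemma commute_dxi_dz (i j : Fin n) : Commute (dxi i) (dz j) := commute_pderiv _ _

lemma Dxi_eq_noncommProd (β : Fin n → ℕ) :
    Dxi β = univ.noncommProd (fun i => dxi i ^ β i)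
      (Set.pairwise_of_forall _ _ fun i j => (commute_dxi_dxi i j).pow_pow _ _) :=
  List.prod_ofFn_eq_noncommProd _ _

lemma Dz_eq_noncommProd (β : Fin n → ℕ) :
    Dz β = univ.noncommProd (fun i => dz i ^ β i)
      (Set.pairwise_of_forall _ _ fun i j => (commute_dz_dz i j).pow_pow _ _) :=
  List.prod_ofFn_eq_noncommProd _ _

lemma Dxi_zero : Dxi (0 : Fin n → ℕ) = 1 := by
  simp [Dxi]

lemma Dz_zero : Dz (0 : Fin n → ℕ) = 1 := by
  simp [Dz]

lemma commute_Dxi {A : Module.End ℂ (P n)} (β : Fin n → ℕ) (h : ∀ i, Commute (dxi i) A) :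
    Commute (Dxi β) A := by
  rw [Dxi_eq_noncommProd]
  exact (noncommProd_commute _ _ _ _ fun i _ => ((h i).pow_left _).symm).symm

lemma commute_Dz {A : Module.End ℂ (P n)} (β : Fin n → ℕ) (h : ∀ i, Commute (dz i) A) :
    Commute (Dz β) A := by
  rw [Dz_eq_noncommProd]
  exact (noncommProd_commute _ _ _ _ fun i _ => ((h i).pow_left _).symm).symm

lemma Lam_pow (m : ℕ) :
    Lam ^ m = ∑ k ∈ piAntidiag univ m,
      (Nat.multinomial univ k : Module.End ℂ (P n)) * (Dxi k * Dz k) := by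
  have hcomm : ∀ i j : Fin n, Commute (dxi i * dz i) (dxi j * dz j) := fun i j =>
    ((commute_dxi_dxi i j).mul_right (commute_dxi_dz i j)).mul_left
      ((commute_dxi_dz j i).symm.mul_right (commute_dz_dz i j))
  rw [Lam, sum_pow_eq_sum_piAntidiag_of_commute _ _ (Set.pairwise_of_forall _ _ hcomm)]
  refine sum_congr rfl fun k _ => ?_
  rw [Dxi_eq_noncommProd, Dz_eq_noncommProd, ← noncommProd_mul_distrib (comm_gf :=
    Set.pairwise_of_forall _ _ fun i j => (commute_dxi_dz j i).symm.pow_pow _ _)]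
  exact congrArg _ (noncommProd_congr rfl (fun i _ => (commute_dxi_dz i i).mul_pow _) _)

lemma dz_ofXi (i : Fin n) (l : MvPolynomial (Fin n) ℂ) : dz i (ofXi l) = 0 := by
  classical
  refine pderiv_eq_zero_of_notMem_vars fun h => ?_
  obtain ⟨j, -, hj⟩ := mem_vars_rename _ _ h
  exact Sum.inl_ne_inr hj

lemma dxi_ofZ (i : Fin n) (p : MvPolynomial (Fin n) ℂ) : dxi i (ofZ p) = 0 := by
  classical
  refine pderiv_eq_zero_of_notMem_vars fun h => ?_
  obtain ⟨j, -, hj⟩ := mem_vars_rename _ _ h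
  exact Sum.inr_ne_inl hj

lemma Lam_ofXi (l : MvPolynomial (Fin n) ℂ) : Lam (ofXi l) = 0 := by
  simp [Lam, dz_ofXi]

lemma Lam_ofZ (p : MvPolynomial (Fin n) ℂ) : Lam (ofZ p) = 0 := by
  simp [Lam, (commute_dxi_dz _ _).eq, dxi_ofZ]

lemma Dz_ofXi_of_ne_zero {α : Fin n → ℕ} (hα : α ≠ 0) (l : MvPolynomial (Fin n) ℂ) :
    Dz α (ofXi l) = 0 := by
  obtain ⟨i, hi⟩ := Function.ne_iff.1 hα
  rw [Dz_eq_noncommProd, ← noncommProd_erase_mul _ (mem_univ i), Module.End.mul_apply,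
    ← Nat.succ_pred_eq_of_ne_zero hi, pow_succ, Module.End.mul_apply, dz_ofXi, map_zero, map_zero]

lemma lowersTotalDegreeBy_Dxi (β : Fin n → ℕ) : LowersTotalDegreeBy (Dxi β) (mdeg β) :=
  LowersTotalDegreeBy.prod_ofFn fun i => by
    simpa only [dxi, mul_one] using (LowersTotalDegreeBy.pderiv _).pow (β i)

lemma Dxi_ofXi_of_totalDegree_lt {β : Fin n → ℕ} {l : MvPolynomial (Fin n) ℂ}
    (h : l.totalDegree < mdeg β) : Dxi β (ofXi l) = 0 :=
  (lowersTotalDegreeBy_Dxi β).apply_eq_zero ((totalDegree_rename_le _ l).trans_lt h)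

lemma Dxi_Dz_ofXi_mul_ofZ (k : Fin n → ℕ) (l p : MvPolynomial (Fin n) ℂ) :
    Dxi k (Dz k (ofXi l * ofZ p)) = Dxi k (ofXi l) * Dz k (ofZ p) := by
  have hDz : Commute (Dz k) (LinearMap.mulLeft ℂ (ofXi l)) :=
    commute_Dz k fun i => commute_pderiv_mulLeft (dz_ofXi i l)
  have hDxi : Commute (Dxi k) (LinearMap.mulLeft ℂ (Dz k (ofZ p))) := by
    refine commute_Dxi k fun i => commute_pderiv_mulLeft ?_
    change (dxi i * Dz k) (ofZ p) = 0
    rw [(commute_Dz k fun j => (commute_dxi_dz i j).symm).symm.eq, Module.End.mul_apply,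
      dxi_ofZ, map_zero]
  have hl : Dz k (ofXi l * ofZ p) = ofXi l * Dz k (ofZ p) := LinearMap.congr_fun hDz.eq (ofZ p)
  have hp : Dxi k (Dz k (ofZ p) * ofXi l) = Dz k (ofZ p) * Dxi k (ofXi l) :=
    LinearMap.congr_fun hDxi.eq (ofXi l)
  rw [hl, mul_comm, hp, mul_comm]

lemma Lam_pow_ofXi_mul_ofZ (m : ℕ) (l p : MvPolynomial (Fin n) ℂ) :
    (Lam ^ m) (ofXi l * ofZ p) = ∑ k ∈ piAntidiag univ m,
      (Nat.multinomial univ k : ℂ) • (Dxi k (ofXi l) * Dz k (ofZ p)) := by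
  rw [Lam_pow, LinearMap.sum_apply]
  refine sum_congr rfl fun k _ => ?_
  rw [Module.End.mul_apply, Module.End.mul_apply, Dxi_Dz_ofXi_mul_ofZ, Module.End.natCast_apply,
    Nat.cast_smul_eq_nsmul]

lemma Phi_eq_self_of_Lam_eq_zero {f : P n} (hf : Lam f = 0) (t : ℂ) : Phi t f = f := by
  rw [Phi, finsum_eq_single _ 0 fun m hm => ?_]
  · simp
  · obtain ⟨m, rfl⟩ := Nat.exists_eq_succ_of_ne_zero hm
    rw [show (Lam ^ (m + 1)) f = 0 by rw [pow_succ, Module.End.mul_apply, hf, map_zero], smul_zero]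

lemma astar_neg_ofXi_ofZ (t : ℂ) (l p : MvPolynomial (Fin n) ℂ) :
    astar (-t) (ofXi l) (ofZ p) =
      ∑ᶠ β, (t ^ mdeg β / mfact β : ℂ) • (Dxi β (ofXi l) * Dz β (ofZ p)) := by
  rw [astar, finsum_eq_single _ 0 fun α hα => by simp [Dz_ofXi_of_ne_zero hα]]
  simp [Dz_zero, Dxi_zero, mdeg, mfact]

lemma finsum_sum_piAntidiag {ι M : Type*} [Fintype ι] [DecidableEq ι] [AddCommMonoid M]
    {g : (ι → ℕ) → M} (N : ℕ) (hg : ∀ k, N < ∑ i, k i → g k = 0) :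
    ∑ᶠ m, ∑ k ∈ piAntidiag univ m, g k = ∑ᶠ k, g k := by
  have hdisj :
      ((range (N + 1) : Finset ℕ) : Set ℕ).PairwiseDisjoint (piAntidiag (univ : Finset ι)) :=
    fun a _ b _ hab => disjoint_left.2 fun k ha hb =>
      hab ((mem_piAntidiag.1 ha).1.symm.trans (mem_piAntidiag.1 hb).1)
  rw [finsum_eq_sum_of_support_subset (s := range (N + 1)) _ ?_,
    finsum_eq_sum_of_support_subset (s := (range (N + 1)).biUnion (piAntidiag univ)) _ ?_,
    sum_biUnion hdisj]
  · intro k hk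
    have : ∑ i, k i ≤ N := not_lt.1 fun h => hk (hg k h)
    simpa [mem_piAntidiag] using Nat.lt_succ_of_le this
  · intro m hm
    refine mem_range.2 (Nat.lt_succ_of_le (not_lt.1 fun h => hm ?_))
    exact sum_eq_zero fun k hk => hg k ((mem_piAntidiag.1 hk).1 ▸ h)

lemma inv_factorial_mul_multinomial {k : Fin n → ℕ} {m : ℕ} (hk : mdeg k = m) :
    (m.factorial : ℂ)⁻¹ * Nat.multinomial univ k = (mfact k : ℂ)⁻¹ := by
  have hpos : (Nat.multinomial univ k : ℂ) ≠ 0 :=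
    Nat.cast_ne_zero.2 (Nat.multinomial_pos univ k).ne'
  rw [← hk, mdeg, ← Nat.multinomial_spec, Nat.cast_mul, mul_inv, mul_assoc, inv_mul_cancel₀ hpos,
    mul_one, mfact]

/-- Φ_t fixes λ(ξ) and p(z), and Φ_t(λ(ξ)p(z)) = λ(ξ) ∗_{-t} p(z). -/
theorem Phi_fix_and_product (n : ℕ) (t : ℂ) (l p : MvPolynomial (Fin n) ℂ) :
    Phi t (ofXi l) = ofXi l ∧ Phi t (ofZ p) = ofZ p ∧
    Phi t (ofXi l * ofZ p) = astar (-t) (ofXi l) (ofZ p) := by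
  refine ⟨Phi_eq_self_of_Lam_eq_zero (Lam_ofXi l) t, Phi_eq_self_of_Lam_eq_zero (Lam_ofZ p) t, ?_⟩
  rw [astar_neg_ofXi_ofZ, ← finsum_sum_piAntidiag l.totalDegree fun k hk => by
    rw [Dxi_ofXi_of_totalDegree_lt hk, zero_mul, smul_zero]]
  refine finsum_congr fun m => ?_
  rw [Lam_pow_ofXi_mul_ofZ, smul_sum]
  refine sum_congr rfl fun k hk => ?_
  have hdeg : mdeg k = m := (mem_piAntidiag.1 hk).1
  rw [smul_smul, hdeg, div_eq_mul_inv, div_eq_mul_inv, mul_assoc,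
    inv_factorial_mul_multinomial hdeg]
end
end

section
/- For m ∈ ℕ and one variable, the one-variable Laguerre polynomial satisfies L_m(ξz) = ((-1)^m/m!)·(ξ - ∂_z)^m(z^m) as polynomials in ℂ[ξ,z]; equivalently L_m(ξz) = ((-1)^m/m!)·(ξ^m ∗ z^m), where ∗ = ∗_{t=1}. -/
open MvPolynomial

noncomputable section

variable {n : ℕ}

def ZPowZ (α : Fin n → ℕ) : P n := ∏ i, zv i ^ α i
/-- The Laguerre polynomial L_m(z) = Σ_{j=0}^m C(m, m-j)(-z)^j/j!. -/
def laguerre (m : ℕ) : Polynomial ℂ :=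
  ∑ j ∈ Finset.range (m + 1),
    Polynomial.C ((m.choose (m - j) : ℂ) * (-1) ^ j / (j.factorial : ℂ)) * Polynomial.X ^ j


/-!
Both sides are expanded in the monomials `(ξz)^k`. Multiplication by `ξ` commutes with `∂`, so
the binomial theorem gives `(ξ - ∂)^m z^m = Σ_k C(m,k) (-1)^(m-k) ξ^k ∂^(m-k) z^m`, with
`∂^(m-k) z^m = (m!/k!) z^k`. In `ξ^m ∗ z^m` every term with `α ≠ 0` vanishes because `∂` kills
`ξ^m`, leaving `Σ_b ((-1)^b / b!) (δ^b ξ^m)(∂^b z^m)`. Both coefficient sequences then agree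
with those of `L_m(ξz) = Σ_j C(m,j) (-1)^j (ξz)^j / j!`.
-/

namespace MvPolynomial

variable {σ R : Type*} [CommSemiring R]

theorem pderiv_pow_apply_X_pow (i : σ) (k m : ℕ) :
    ((pderiv i).toLinearMap ^ k : Module.End R (MvPolynomial σ R)) (X i ^ m) =
      m.descFactorial k • X i ^ (m - k) := by
  induction k with
  | zero => simp
  | succ k ih =>
    rw [pow_succ', Module.End.mul_apply, ih, Derivation.coeFn_coe, map_nsmul, pderiv_pow,
      pderiv_X_self, mul_one, ← nsmul_eq_mul, smul_smul, Nat.descFactorial_succ, mul_comm,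
      Nat.sub_sub]

theorem pderiv_pow_apply_X_pow_of_ne {i j : σ} (h : j ≠ i) {k : ℕ} (hk : k ≠ 0) (m : ℕ) :
    ((pderiv i).toLinearMap ^ k : Module.End R (MvPolynomial σ R)) (X j ^ m) = 0 := by
  obtain ⟨k, rfl⟩ := Nat.exists_eq_succ_of_ne_zero hk
  rw [pow_succ, Module.End.mul_apply, Derivation.coeFn_coe, pderiv_pow, pderiv_X_of_ne h,
    mul_zero, map_zero]

theorem commute_mulLeft_X_pderiv {i j : σ} (h : j ≠ i) :
    Commute (LinearMap.mulLeft R (X j : MvPolynomial σ R)) (pderiv i).toLinearMap :=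
  LinearMap.ext fun f => by simp [pderiv_X_of_ne h]

end MvPolynomial

theorem aeval_laguerre {A : Type*} [Semiring A] [Algebra ℂ A] (x : A) (m : ℕ) :
    Polynomial.aeval x (laguerre m) =
      ∑ j ∈ Finset.range (m + 1), ((m.choose j : ℂ) * (-1) ^ j / j.factorial) • x ^ j := by
  refine (map_sum _ _ _).trans (Finset.sum_congr rfl fun j hj => ?_)
  rw [Nat.choose_symm (Finset.mem_range_succ_iff.mp hj), map_mul, Polynomial.aeval_C,
    map_pow, Polynomial.aeval_X, Algebra.smul_def]

theorem commute_mulXi_dz (i : Fin n) : Commute (mulXi i) (dz i) :=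
  commute_mulLeft_X_pderiv Sum.inl_ne_inr

theorem dz_pow_apply_zv_pow (i : Fin n) (k m : ℕ) :
    (dz i ^ k) (zv i ^ m) = (m.descFactorial k : ℂ) • zv i ^ (m - k) := by
  rw [Nat.cast_smul_eq_nsmul]
  exact pderiv_pow_apply_X_pow _ k m

theorem dxi_pow_apply_xiv_pow (i : Fin n) (k m : ℕ) :
    (dxi i ^ k) (xiv i ^ m) = (m.descFactorial k : ℂ) • xiv i ^ (m - k) := by
  rw [Nat.cast_smul_eq_nsmul]
  exact pderiv_pow_apply_X_pow _ k m

theorem dz_pow_apply_xiv_pow (i : Fin n) {k : ℕ} (hk : k ≠ 0) (m : ℕ) :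
    (dz i ^ k) (xiv i ^ m) = 0 :=
  pderiv_pow_apply_X_pow_of_ne Sum.inl_ne_inr hk m

theorem mulXi_sub_dz_pow_apply_zv_pow (i : Fin n) (m : ℕ) :
    ((mulXi i - dz i) ^ m) (zv i ^ m) = ∑ k ∈ Finset.range (m + 1),
      ((-1) ^ (m - k) * m.choose k * m.descFactorial (m - k) : ℂ) • (xiv i * zv i) ^ k := by
  rw [sub_eq_add_neg, (commute_mulXi_dz i).neg_right.add_pow, LinearMap.sum_apply]
  refine Finset.sum_congr rfl fun k hk => ?_
  have hkm : m - (m - k) = k := Nat.sub_sub_self (Finset.mem_range_succ_iff.mp hk)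
  rw [← neg_one_smul ℂ (dz i), smul_pow, mulXi, LinearMap.pow_mulLeft]
  simp only [Module.End.mul_apply, Module.End.natCast_apply, LinearMap.smul_apply,
    LinearMap.mulLeft_apply, ← Nat.cast_smul_eq_nsmul ℂ, map_smul, dz_pow_apply_zv_pow, hkm,
    mul_pow, smul_smul, mul_smul_comm]
  congr 1
  ring

theorem astar_fin_one (t : ℂ) (f g : P 1) :
    astar t f g = ∑ᶠ (a : ℕ) (b : ℕ),
      ((-t) ^ (a + b) / (a.factorial * b.factorial : ℂ)) •
        ((dxi 0 ^ b) ((dz 0 ^ a) f) * (dz 0 ^ b) ((dxi 0 ^ a) g)) := by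
  rw [astar, ← finsum_comp_equiv (Equiv.funUnique (Fin 1) ℕ).symm]
  refine finsum_congr fun a => ?_
  rw [← finsum_comp_equiv (Equiv.funUnique (Fin 1) ℕ).symm]
  simp [Dz, Dxi, mdeg, mfact]

theorem astar_one_xiv_pow_zv_pow (m : ℕ) :
    astar 1 (xiv 0 ^ m) (zv 0 ^ m : P 1) = ∑ b ∈ Finset.range (m + 1),
      ((-1) ^ b / b.factorial * m.descFactorial b ^ 2 : ℂ) • (xiv 0 * zv 0) ^ (m - b) := by
  have h_outer : ∀ a ≠ 0, ∑ᶠ b : ℕ, ((-1 : ℂ) ^ (a + b) / (a.factorial * b.factorial : ℂ)) •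
      ((dxi 0 ^ b) ((dz 0 ^ a) (xiv 0 ^ m)) * (dz 0 ^ b) ((dxi 0 ^ a) (zv 0 ^ m : P 1))) = 0 :=
    fun a ha => by simp [dz_pow_apply_xiv_pow 0 ha]
  have h_support : ∀ b ∉ Finset.range (m + 1),
      ((-1) ^ b / b.factorial * m.descFactorial b ^ 2 : ℂ) • (xiv 0 * zv 0 : P 1) ^ (m - b) = 0 :=
    fun b hb => by simp [Nat.descFactorial_eq_zero_iff_lt.mpr (by simpa using hb)]
  rw [astar_fin_one, finsum_eq_single _ 0 h_outer, ← finsum_eq_finsetSum_of_support_subset _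
    (Function.support_subset_iff'.mpr h_support)]
  refine finsum_congr fun b => ?_
  simp only [pow_zero, Module.End.one_apply, zero_add, Nat.factorial_zero, Nat.cast_one, one_mul,
    dxi_pow_apply_xiv_pow, dz_pow_apply_zv_pow, smul_mul_smul_comm, mul_pow, smul_smul]
  congr 1
  ring

theorem cast_descFactorial_of_le {K : Type*} [Field K] [CharZero K] {k m : ℕ} (h : k ≤ m) :
    (m.descFactorial k : K) = m.factorial / (m - k).factorial := by
  rw [eq_div_iff (Nat.cast_ne_zero.mpr (Nat.factorial_ne_zero _)), mul_comm, ← Nat.cast_mul,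
    Nat.factorial_mul_descFactorial h]

theorem laguerre_coeff_of_mulXi_sub_dz {K : Type*} [Field K] [CharZero K] {k m : ℕ}
    (h : k ≤ m) :
    (-1) ^ m / m.factorial * ((-1) ^ (m - k) * m.choose k * m.descFactorial (m - k) : K) =
      m.choose k * (-1) ^ k / k.factorial := by
  obtain ⟨d, rfl⟩ := Nat.exists_eq_add_of_le h
  rw [cast_descFactorial_of_le (by omega), Nat.add_sub_cancel_left, Nat.add_sub_cancel]
  field_simp
  rw [div_eq_div_iff (by simp [Nat.factorial_ne_zero]) (by simp [Nat.factorial_ne_zero])]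
  linear_combination ((-1) ^ k * ((k + d).factorial : K) * (k + d).choose k * k.factorial) *
    (even_two_mul d).neg_one_pow (α := K)

theorem laguerre_coeff_of_astar {K : Type*} [Field K] [CharZero K] {b m : ℕ} (h : b ≤ m) :
    (-1) ^ m / m.factorial * ((-1) ^ b / b.factorial * m.descFactorial b ^ 2 : K) =
      m.choose (m - b) * (-1) ^ (m - b) / (m - b).factorial := by
  obtain ⟨d, rfl⟩ := Nat.exists_eq_add_of_le' h
  rw [cast_descFactorial_of_le h, Nat.add_sub_cancel, Nat.cast_choose K (by omega),
    Nat.add_sub_cancel_left]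
  field_simp
  linear_combination ((-1) ^ d * ((d + b).factorial : K) / (b.factorial * d.factorial ^ 2)) *
    (even_two_mul b).neg_one_pow (α := K)

/-- L_m(ξz) = ((-1)^m/m!)(ξ - ∂)^m(z^m) = ((-1)^m/m!)(ξ^m ∗ z^m), where ∗ = ∗_{t=1}. -/
theorem laguerre_eq_astar (m : ℕ) :
    Polynomial.aeval (xiv 0 * zv 0 : P 1) (laguerre m) =
      ((-1 : ℂ) ^ m / (m.factorial : ℂ)) • (((mulXi 0 - dz 0 : Module.End ℂ (P 1)) ^ m) ((zv 0 : P 1) ^ m)) ∧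
    Polynomial.aeval (xiv 0 * zv 0 : P 1) (laguerre m) =
      ((-1 : ℂ) ^ m / (m.factorial : ℂ)) • astar 1 ((xiv 0) ^ m) ((zv 0) ^ m) := by
  rw [aeval_laguerre]
  constructor
  · rw [mulXi_sub_dz_pow_apply_zv_pow, Finset.smul_sum]
    refine Finset.sum_congr rfl fun k hk => ?_
    rw [smul_smul, laguerre_coeff_of_mulXi_sub_dz (Finset.mem_range_succ_iff.mp hk)]
  · rw [astar_one_xiv_pow_zv_pow, Finset.smul_sum, ← Finset.sum_range_reflect _ (m + 1)]
    refine Finset.sum_congr rfl fun b hb => ?_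
    rw [smul_smul, laguerre_coeff_of_astar (Finset.mem_range_succ_iff.mp hb), Nat.add_sub_cancel]
end
end

section
/- For any α, β ∈ ℕⁿ, ξ^β·(ξ^α ∗ z^{α+β}) = z^β·(ξ^{α+β} ∗ z^α) in ℂ[ξ,z], where ∗ = ∗_{t=1}; indeed both sides equal Σ_{γ ≤ β} C(β,γ)·((α+β)!/(α+β-γ)!)·(ξ^{α+β-γ} ∗ z^{α+β-γ}). -/
open MvPolynomial

noncomputable section

variable {n : ℕ}

def ZvPow (α : Fin n → ℕ) : P n := ∏ i, zv i ^ α i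
/-!
In `ξ^a ∗ z^b` only the terms without `z`-derivatives of `ξ^a` survive, and what is left factors
over the coordinates: `ξ^a ∗ z^b = ∏ᵢ Σ_g (-1)^g C(aᵢ, g) bᵢ^(g) ξᵢ^(aᵢ-g) zᵢ^(bᵢ-g)`.
Both identities therefore reduce to a single pair of variables, where after multiplying by `ξ^b`
(resp. `z^b`) everything is a polynomial in `ξz`. The first identity is then the symmetry
`C(a, g) b^(g) = C(b, g) a^(g)`, and the second, after exchanging the order of summation, is the
alternating Vandermonde identity `Σ_g (-1)^g C(b, g) C(a+b-g, e-g) = C(a, e)`.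
-/

open Finset

theorem sum_neg_one_pow_mul_choose_mul_choose :
    ∀ (b a e : ℕ), ∑ g ∈ range (e + 1),
      (-1 : ℤ) ^ g * b.choose g * (a + b - g).choose (e - g) = a.choose e
  | 0, a, e => by
    rw [sum_range_succ', sum_eq_zero fun g _ => by simp]
    simp
  | b + 1, a, 0 => by simp
  | b + 1, a, e + 1 => by
    have ih₁ := sum_neg_one_pow_mul_choose_mul_choose b (a + 1) (e + 1)
    have ih₂ := sum_neg_one_pow_mul_choose_mul_choose b a e
    rw [sum_range_succ'] at ih₁ ⊢
    have hsplit : ∀ g ∈ range (e + 1),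
        (-1 : ℤ) ^ (g + 1) * (b + 1).choose (g + 1) *
            (a + (b + 1) - (g + 1)).choose (e + 1 - (g + 1)) =
          (-1 : ℤ) ^ (g + 1) * b.choose (g + 1) * (a + 1 + b - (g + 1)).choose (e + 1 - (g + 1)) -
            (-1 : ℤ) ^ g * b.choose g * (a + b - g).choose (e - g) := by
      intro g _
      rw [Nat.choose_succ_succ', show a + (b + 1) - (g + 1) = a + b - g by omega,
        show a + 1 + b - (g + 1) = a + b - g by omega, show e + 1 - (g + 1) = e - g by omega]
      push_cast
      ring
    rw [sum_congr rfl hsplit, sum_sub_distrib, ih₂, show a + (b + 1) = a + 1 + b by omega]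
    have hpascal := Nat.choose_succ_succ' a e
    simp only [pow_zero, Nat.choose_zero_right, Nat.sub_zero] at ih₁ ⊢
    push_cast [hpascal] at ih₁ ⊢
    linear_combination ih₁

/-- The coefficient `(-1)^g a^(g) b^(g) / g!` of `(ξz)^…` in the one-variable product `ξ^a ∗ z^b`,
written with `C(a, g)` so that it is visibly an integer. -/
def starCoeff (a b g : ℕ) : ℤ := (-1) ^ g * (a.choose g * b.descFactorial g : ℕ)

theorem starCoeff_comm (a b g : ℕ) : starCoeff a b g = starCoeff b a g := by
  suffices a.choose g * b.descFactorial g = b.choose g * a.descFactorial g by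
    rw [starCoeff, starCoeff, this]
  apply Nat.eq_of_mul_eq_mul_left g.factorial_pos
  simp only [Nat.descFactorial_eq_factorial_mul_choose]
  ring

theorem starCoeff_of_lt_left {a b g : ℕ} (h : a < g) : starCoeff a b g = 0 := by
  simp [starCoeff, Nat.choose_eq_zero_of_lt h]

theorem sum_choose_mul_descFactorial_mul_starCoeff (a b e : ℕ) :
    ∑ g ∈ range (e + 1), ((b.choose g * (a + b).descFactorial g : ℕ) : ℤ) *
      starCoeff (a + b - g) (a + b - g) (e - g) = starCoeff a (a + b) e := by
  have hterm : ∀ g ∈ range (e + 1),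
      ((b.choose g * (a + b).descFactorial g : ℕ) : ℤ) * starCoeff (a + b - g) (a + b - g) (e - g)
        = (-1) ^ e * (a + b).descFactorial e *
          ((-1 : ℤ) ^ g * b.choose g * (a + b - g).choose (e - g)) := by
    intro g hg
    have hge : g ≤ e := Nat.lt_succ_iff.mp (mem_range.mp hg)
    have hdesc := Nat.descFactorial_mul_descFactorial (n := a + b) hge
    have hsign : (-1 : ℤ) ^ (e - g) = (-1) ^ e * (-1) ^ g := by
      rw [← pow_add, show e + g = e - g + 2 * g by omega, pow_add, pow_mul, neg_one_sq, one_pow,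
        mul_one]
    rw [starCoeff, hsign, ← hdesc]
    push_cast
    ring
  rw [sum_congr rfl hterm, ← mul_sum, sum_neg_one_pow_mul_choose_mul_choose, starCoeff]
  push_cast
  ring

section StarPoly

variable {R : Type*} [CommRing R] (x y : R)

/-- `ξ^a ∗ z^b` in a single pair of variables, with `x`, `y` in the roles of `ξ`, `z`. -/
def starPoly (a b : ℕ) : R :=
  ∑ g ∈ range (a + 1), (starCoeff a b g : R) * (x ^ (a - g) * y ^ (b - g))

theorem pow_mul_starPoly_add (a b : ℕ) :
    x ^ b * starPoly x y a (a + b) =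
      ∑ g ∈ range (a + b + 1), (starCoeff a (a + b) g : R) * (x * y) ^ (a + b - g) := by
  rw [starPoly, mul_sum, ← sum_subset (range_subset_range.mpr (show a + 1 ≤ a + b + 1 by omega))
    fun g _ hg => by
      rw [starCoeff_of_lt_left (by simpa using hg), Int.cast_zero, zero_mul]]
  refine sum_congr rfl fun g hg => ?_
  rw [show a + b - g = b + (a - g) by have := mem_range.mp hg; omega]
  ring

theorem pow_mul_starPoly_add_swap (a b : ℕ) :
    y ^ b * starPoly x y (a + b) a =
      ∑ g ∈ range (a + b + 1), (starCoeff a (a + b) g : R) * (x * y) ^ (a + b - g) := by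
  rw [starPoly, mul_sum]
  refine sum_congr rfl fun g _ => ?_
  rw [starCoeff_comm]
  rcases le_or_gt g a with hga | hag
  · rw [show a + b - g = b + (a - g) by omega]
    ring
  · rw [starCoeff_of_lt_left hag, Int.cast_zero, zero_mul, zero_mul, mul_zero]

theorem starPoly_self (m : ℕ) :
    starPoly x y m m = ∑ g ∈ range (m + 1), (starCoeff m m g : R) * (x * y) ^ (m - g) := by
  simp only [starPoly, mul_pow]

theorem pow_mul_starPoly_add_eq_sum_starPoly_sub (a b : ℕ) :
    x ^ b * starPoly x y a (a + b) =
      ∑ g ∈ range (b + 1), ((b.choose g * (a + b).descFactorial g : ℕ) : R) *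
        starPoly x y (a + b - g) (a + b - g) := by
  set m := a + b
  have hextend : ∑ g ∈ range (b + 1), ((b.choose g * m.descFactorial g : ℕ) : R) *
        starPoly x y (m - g) (m - g) =
      ∑ g ∈ range (m + 1), ∑ d ∈ range (m + 1 - g), ((b.choose g * m.descFactorial g : ℕ) : R) *
        ((starCoeff (m - g) (m - g) d : R) * (x * y) ^ (m - g - d)) := by
    refine sum_subset (range_subset_range.mpr (by omega)) (fun g _ hg => ?_) |>.trans
      (sum_congr rfl fun g hg => ?_)
    · rw [Nat.choose_eq_zero_of_lt (by simpa using hg)]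
      simp
    · rw [starPoly_self, mul_sum, show m + 1 - g = m - g + 1 by
        have := mem_range.mp hg; omega]
  rw [hextend, ← sum_range_diag_flip, pow_mul_starPoly_add]
  refine sum_congr rfl fun e _ => ?_
  rw [← sum_choose_mul_descFactorial_mul_starCoeff, Int.cast_sum, sum_mul]
  refine sum_congr rfl fun g hg => ?_
  have hge : g ≤ e := Nat.lt_succ_iff.mp (mem_range.mp hg)
  rw [show m - g - (e - g) = m - e by omega]
  push_cast
  ring

end StarPoly

theorem finsum_prod_eq_prod_sum_range {ι R : Type*} [Fintype ι] [CommSemiring R] (N : ι → ℕ)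
    (f : ι → ℕ → R) (hf : ∀ i g, N i < g → f i g = 0) :
    ∑ᶠ γ : ι → ℕ, ∏ i, f i (γ i) = ∏ i, ∑ g ∈ range (N i + 1), f i g := by
  classical
  rw [prod_univ_sum]
  refine finsum_eq_sum_of_support_subset _ fun γ hγ => ?_
  by_contra hγN
  obtain ⟨i, hi⟩ : ∃ i, N i < γ i := by simpa [Fintype.mem_piFinset, Nat.lt_succ_iff] using hγN
  exact hγ (prod_eq_zero (mem_univ i) (hf i _ hi))

section MonomialDerivatives

variable {R σ : Type*} [CommSemiring R]

theorem pderiv_pow_monomial (j : σ) (k : ℕ) (s : σ →₀ ℕ) (c : R) :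
    ((pderiv j).toLinearMap ^ k) (monomial s c) =
      monomial (s - Finsupp.single j k) (c * ((s j).descFactorial k : R)) := by
  classical
  induction k with
  | zero => simp
  | succ k ih =>
    rw [pow_succ', Module.End.mul_apply, ih, Derivation.coeFn_coe, pderiv_monomial,
      tsub_tsub, ← Finsupp.single_add, Finsupp.tsub_apply, Finsupp.single_eq_same,
      Nat.descFactorial_succ, Nat.cast_mul, mul_comm ((s j - k : ℕ) : R), mul_assoc]

theorem ofFn_prod_pderiv_pow_monomial {m : ℕ} (f : Fin m → σ) (hf : Function.Injective f)
    (k : Fin m → ℕ) (s : σ →₀ ℕ) (c : R) :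
    (List.ofFn fun i => (pderiv (f i)).toLinearMap ^ k i).prod (monomial s c) =
      monomial (s - ∑ i, Finsupp.single (f i) (k i))
        (c * ∏ i, ((s (f i)).descFactorial (k i) : R)) := by
  classical
  induction m with
  | zero => simp
  | succ m ih =>
    have hf' : Function.Injective fun i : Fin m => f i.succ := hf.comp (Fin.succ_injective m)
    have hfresh : (s - ∑ i : Fin m, Finsupp.single (f i.succ) (k i.succ)) (f 0) = s (f 0) := by
      rw [Finsupp.tsub_apply, Finsupp.finsetSum_apply, sum_eq_zero fun i _ => ?_, Nat.sub_zero]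
      exact Finsupp.single_eq_of_ne (hf.ne (Fin.succ_ne_zero i).symm)
    rw [List.ofFn_succ, List.prod_cons, Module.End.mul_apply,
      ih (fun i => f i.succ) hf' (fun i => k i.succ), pderiv_pow_monomial, Fin.sum_univ_succ,
      Fin.prod_univ_succ]
    simp only [hfresh, tsub_tsub, add_comm (Finsupp.single (f 0) (k 0))]
    ring_nf

end MonomialDerivatives

section Monomials

def biExponent (a b : Fin n → ℕ) : (Fin n ⊕ Fin n) →₀ ℕ :=
  Finsupp.equivFunOnFinite.symm (Sum.elim a b)

theorem XiPow_mul_ZvPow (a b : Fin n → ℕ) :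
    XiPow a * ZvPow b = monomial (biExponent a b) (1 : ℂ) := by
  rw [monomial_eq, C_1, one_mul, Finsupp.prod_fintype _ _ fun _ => pow_zero _,
    Fintype.prod_sum_type]
  simp [biExponent, XiPow, ZvPow, xiv, zv]

@[simp] theorem XiPow_zero : XiPow (0 : Fin n → ℕ) = 1 := by simp [XiPow]
@[simp] theorem ZvPow_zero : ZvPow (0 : Fin n → ℕ) = 1 := by simp [ZvPow]

theorem Dxi_XiPow_mul_ZvPow (γ a b : Fin n → ℕ) :
    Dxi γ (XiPow a * ZvPow b) =
      (∏ i, ((a i).descFactorial (γ i) : ℂ)) • (XiPow (a - γ) * ZvPow b) := by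
  have hexp : biExponent a b - ∑ i, Finsupp.single (Sum.inl i) (γ i) = biExponent (a - γ) b := by
    ext (j | j) <;> simp [biExponent, Finsupp.single_apply]
  rw [XiPow_mul_ZvPow, XiPow_mul_ZvPow, smul_monomial, Dxi]
  exact (ofFn_prod_pderiv_pow_monomial _ Sum.inl_injective γ _ _).trans
    (by rw [hexp, one_mul]; simp [biExponent])

theorem Dz_XiPow_mul_ZvPow (γ a b : Fin n → ℕ) :
    Dz γ (XiPow a * ZvPow b) =
      (∏ i, ((b i).descFactorial (γ i) : ℂ)) • (XiPow a * ZvPow (b - γ)) := by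
  have hexp : biExponent a b - ∑ i, Finsupp.single (Sum.inr i) (γ i) = biExponent a (b - γ) := by
    ext (j | j) <;> simp [biExponent, Finsupp.single_apply]
  rw [XiPow_mul_ZvPow, XiPow_mul_ZvPow, smul_monomial, Dz]
  exact (ofFn_prod_pderiv_pow_monomial _ Sum.inr_injective γ _ _).trans
    (by rw [hexp, one_mul]; simp [biExponent])

end Monomials

section StarProduct

theorem neg_one_pow_div_mfact_mul_prod_descFactorial (a b γ : Fin n → ℕ) :
    (-1 : ℂ) ^ mdeg γ / mfact γ *
        ((∏ i, ((a i).descFactorial (γ i) : ℂ)) * ∏ i, ((b i).descFactorial (γ i) : ℂ)) =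
      ∏ i, (starCoeff (a i) (b i) (γ i) : ℂ) := by
  rw [mdeg, mfact, ← prod_pow_eq_pow_sum, Nat.cast_prod, ← prod_div_distrib, ← prod_mul_distrib,
    ← prod_mul_distrib]
  refine prod_congr rfl fun i _ => ?_
  rw [starCoeff, Nat.descFactorial_eq_factorial_mul_choose (a i)]
  have : ((γ i).factorial : ℂ) ≠ 0 := Nat.cast_ne_zero.mpr (γ i).factorial_ne_zero
  push_cast
  field_simp

theorem astar_one_XiPow_ZvPow (a b : Fin n → ℕ) :
    astar 1 (XiPow a) (ZvPow b) = ∏ i, starPoly (xiv i) (zv i) (a i) (b i) := by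
  have hXi : XiPow a = XiPow a * ZvPow 0 := by simp
  have hZv : ZvPow b = XiPow 0 * ZvPow b := by simp
  have hDz_zero : ∀ α ≠ 0, Dz α (XiPow a) = 0 := by
    intro α hα
    obtain ⟨i, hi⟩ := Function.ne_iff.mp hα
    rw [hXi, Dz_XiPow_mul_ZvPow, prod_eq_zero (mem_univ i), zero_smul]
    simp [Nat.descFactorial_eq_zero_iff_lt, Nat.pos_of_ne_zero hi]
  have hterm : ∀ γ, ((-1 : ℂ) ^ (mdeg (0 : Fin n → ℕ) + mdeg γ) /
        ((mfact (0 : Fin n → ℕ) : ℂ) * mfact γ)) •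
        (Dxi γ (Dz 0 (XiPow a)) * Dz γ (Dxi 0 (ZvPow b))) =
      ∏ i, ((starCoeff (a i) (b i) (γ i) : P n) * (xiv i ^ (a i - γ i) * zv i ^ (b i - γ i))) := by
    intro γ
    have hDz0 : Dz (0 : Fin n → ℕ) (XiPow a) = XiPow a := by
      simpa using Dz_XiPow_mul_ZvPow 0 a 0
    have hDxi0 : Dxi (0 : Fin n → ℕ) (ZvPow b) = ZvPow b := by
      simpa using Dxi_XiPow_mul_ZvPow 0 0 b
    rw [hDz0, hDxi0, hXi, hZv, Dxi_XiPow_mul_ZvPow, Dz_XiPow_mul_ZvPow, smul_mul_smul_comm,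
      smul_smul]
    have hmdeg0 : mdeg (0 : Fin n → ℕ) = 0 := by simp [mdeg]
    have hmfact0 : mfact (0 : Fin n → ℕ) = 1 := by simp [mfact]
    rw [hmdeg0, hmfact0, zero_add, Nat.cast_one, one_mul,
      neg_one_pow_div_mfact_mul_prod_descFactorial, XiPow_zero, ZvPow_zero, mul_one, one_mul,
      Algebra.smul_def, map_prod, XiPow, ZvPow, ← prod_mul_distrib, ← prod_mul_distrib]
    simp only [map_intCast, Pi.sub_apply]
  rw [astar, finsum_eq_single _ 0 fun α hα => by simp [hDz_zero α hα], finsum_congr hterm]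
  simp only [starPoly]
  rw [← finsum_prod_eq_prod_sum_range a]
  intro i g h
  simp [starCoeff_of_lt_left h]

end StarProduct

/-- ξ^β(ξ^α ∗ z^{α+β}) = z^β(ξ^{α+β} ∗ z^α); both equal
    Σ_{γ} C(β,γ)·((α+β)!/(α+β-γ)!)·(ξ^{α+β-γ} ∗ z^{α+β-γ}). -/
theorem xi_z_symmetry (n : ℕ) (α β : Fin n → ℕ) :
    XiPow β * astar 1 (XiPow α) (ZvPow (α + β)) =
      ZvPow β * astar 1 (XiPow (α + β)) (ZvPow α) ∧
    XiPow β * astar 1 (XiPow α) (ZvPow (α + β)) =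
      ∑ᶠ γ : Fin n → ℕ,
        ((∏ i, (β i).choose (γ i) * (α i + β i).descFactorial (γ i) : ℕ) : ℂ) •
          astar 1 (XiPow (α + β - γ)) (ZvPow (α + β - γ)) := by
  have hlhs : XiPow β * astar 1 (XiPow α) (ZvPow (α + β)) =
      ∏ i, xiv i ^ β i * starPoly (xiv i) (zv i) (α i) (α i + β i) := by
    rw [astar_one_XiPow_ZvPow, XiPow, ← prod_mul_distrib]
    rfl
  have hterm : ∀ γ : Fin n → ℕ,
      ((∏ i, (β i).choose (γ i) * (α i + β i).descFactorial (γ i) : ℕ) : ℂ) •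
          astar 1 (XiPow (α + β - γ)) (ZvPow (α + β - γ)) =
        ∏ i, ((((β i).choose (γ i) * (α i + β i).descFactorial (γ i) : ℕ) : P n) *
          starPoly (xiv i) (zv i) (α i + β i - γ i) (α i + β i - γ i)) := by
    intro γ
    rw [astar_one_XiPow_ZvPow, Algebra.smul_def, map_natCast, Nat.cast_prod, ← prod_mul_distrib]
    rfl
  refine ⟨?_, ?_⟩
  · rw [hlhs, astar_one_XiPow_ZvPow, ZvPow, ← prod_mul_distrib]
    exact prod_congr rfl fun i _ =>
      (pow_mul_starPoly_add _ _ _ _).trans (pow_mul_starPoly_add_swap _ _ _ _).symm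
  · rw [hlhs, finsum_congr hterm]
    simp only [pow_mul_starPoly_add_eq_sum_starPoly_sub]
    rw [← finsum_prod_eq_prod_sum_range β]
    intro i g h
    simp [Nat.choose_eq_zero_of_lt h]
end
end

section
/- Let K be a field and f(z) ∈ K[z] with deg f ≥ 2. Then f(z) is irreducible over K if and only if f(ξz) ∈ K[ξ,z], viewed as a polynomial in the two variables ξ and z, is irreducible over K. -/
/-!
If `f(0) = 0` then `z` divides `f(z)` and `ξz` divides `f(ξz)`, so neither is irreducible once
`deg f ≥ 2`. Otherwise view `f(ξz)` and `f(z)` as polynomials in `z` over `K[ξ]`: both are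
primitive, their constant coefficient `f(0)` being a unit, so by Gauss's lemma their
irreducibility can be tested over `K(ξ)`, where `z ↦ ξz` is an automorphism. Finally `f(z)` is
irreducible over `K[ξ]` iff it is over `K`: swapping the variables makes it a constant
polynomial over `K[z]`, and in a UFD irreducible elements are prime.
-/

namespace Polynomial

theorem irreducible_C_iff {R : Type*} [CommRing R] [IsDomain R] [UniqueFactorizationMonoid R]
    {r : R} : Irreducible (C r) ↔ Irreducible r := by
  rw [UniqueFactorizationMonoid.irreducible_iff_prime,
    UniqueFactorizationMonoid.irreducible_iff_prime, prime_C_iff]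

theorem not_irreducible_of_coeff_zero_eq_zero {R : Type*} [Semiring R] [IsDomain R]
    {p : R[X]} (h0 : p.coeff 0 = 0) (h2 : 2 ≤ p.natDegree) : ¬Irreducible p := by
  obtain ⟨q, rfl⟩ := X_dvd_iff.mpr h0
  intro hp
  have hq : q ≠ 0 := by rintro rfl; simp at h2
  rcases hp.isUnit_or_isUnit rfl with hX | hq'
  · exact not_isUnit_X hX
  · rw [natDegree_mul X_ne_zero hq, natDegree_eq_zero_of_isUnit hq'] at h2
    simp at h2

theorem isPrimitive_of_isUnit_coeff {R : Type*} [CommSemiring R] {p : R[X]} {n : ℕ}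
    (h : IsUnit (p.coeff n)) : p.IsPrimitive :=
  fun r hr ↦ isUnit_of_dvd_unit ((C_dvd_iff_dvd_coeff r p).mp hr n) h

theorem irreducible_comp_C_mul_X_iff {R : Type*} [CommRing R] {a : R} (ha : IsUnit a)
    {p : R[X]} : Irreducible (p.comp (C a * X)) ↔ Irreducible p := by
  let := ha.invertible
  simpa [comp_eq_aeval] using MulEquiv.irreducible_iff (algEquivCMulXAddC a 0) (x := p)

theorem IsPrimitive.irreducible_comp_C_mul_X_iff {R : Type*} [CommRing R] [IsDomain R]
    [IsGCDMonoid R] {p : R[X]} {a : R} (ha : a ≠ 0) (hp : p.IsPrimitive)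
    (hpa : (p.comp (C a * X)).IsPrimitive) :
    Irreducible (p.comp (C a * X)) ↔ Irreducible p := by
  have hφa : IsUnit (algebraMap R (FractionRing R) a) :=
    (IsFractionRing.to_map_ne_zero_of_mem_nonZeroDivisors
      (mem_nonZeroDivisors_of_ne_zero ha)).isUnit
  rw [hpa.irreducible_iff_irreducible_map_fraction_map (K := FractionRing R),
    hp.irreducible_iff_irreducible_map_fraction_map (K := FractionRing R), map_comp,
    Polynomial.map_mul, map_C, map_X, Polynomial.irreducible_comp_C_mul_X_iff hφa]

theorem irreducible_map_C_comp_C_X_mul_X_iff {K : Type*} [Field K] {f : K[X]}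
    (hf : 2 ≤ f.natDegree) :
    Irreducible ((f.map C).comp (C X * X) : K[X][X]) ↔ Irreducible f := by
  by_cases h0 : f.coeff 0 = 0
  · refine iff_of_false (not_irreducible_of_coeff_zero_eq_zero (by simp [h0]) ?_)
      (not_irreducible_of_coeff_zero_eq_zero h0 hf)
    rwa [natDegree_comp, natDegree_C_mul_X _ X_ne_zero, mul_one,
      natDegree_map_eq_of_injective C_injective]
  · have hunit : IsUnit ((f.map C).coeff 0) := by simpa using h0
    rw [IsPrimitive.irreducible_comp_C_mul_X_iff X_ne_zero (isPrimitive_of_isUnit_coeff hunit)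
        (isPrimitive_of_isUnit_coeff (n := 0) (by simpa using hunit)),
      ← Bivariate.swap_C, MulEquiv.irreducible_iff, irreducible_C_iff]

theorem Bivariate.equivMvPolynomial_map_C_comp {R : Type*} [CommSemiring R] (f : R[X])
    (q : R[X][X]) : equivMvPolynomial R ((f.map C).comp q) = aeval (equivMvPolynomial R q) f := by
  rw [comp, eval₂_map]
  exact (DFunLike.congr_fun (aeval_algEquiv (equivMvPolynomial R) q) f).symm

end Polynomial

open MvPolynomial

/-- For f ∈ K[z] with deg f ≥ 2, f(z) is irreducible over K iff f(ξz) ∈ K[ξ,z],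
viewed as a polynomial in the two variables ξ and z, is irreducible over K. -/
theorem irreducible_iff_irreducible_comp_mul (K : Type*) [Field K] (f : Polynomial K)
    (hf : 2 ≤ f.natDegree) :
    Irreducible f ↔
      Irreducible (Polynomial.aeval (X 0 * X 1 : MvPolynomial (Fin 2) K) f) := by
  rw [← Polynomial.irreducible_map_C_comp_C_X_mul_X_iff hf,
    ← MulEquiv.irreducible_iff (Polynomial.Bivariate.equivMvPolynomial K),
    Polynomial.Bivariate.equivMvPolynomial_map_C_comp, map_mul,
    Polynomial.Bivariate.equivMvPolynomial_C_X, Polynomial.Bivariate.equivMvPolynomial_X]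
end
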